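/- arXiv:2212.11580 — 5 statements merged into one kernel-verified Lean document; each statement's English description precedes it below -/
import Mathlib

section
/- For all units u and v: if norm u = norm v then eval u = eval v; if eval u = eval v then root u = root v; and if root u = root v then dim u = dim v. In other words, normal equivalence entails numerical equivalence, which entails root equivalence, which entails codimensionality. -/
open Finsupp

/-- The positive rationals, as a multiplicative group. -/
abbrev Ratio : Type := {q : ℚ // 0 < q}

/-- Prefixes: the free abelian group over base prefixes `P`. -/
abbrev PrefG (P : Type*) : Type _ := P →₀ ℤ
/-- Root units: the free abelian group over base units `B`. -/
abbrev RootG (B : Type*) : Type _ := B →₀ ℤ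
/-- Units: the free abelian group over preunits (prefix, base unit). -/
abbrev UnitG (P B : Type*) : Type _ := ((P →₀ ℤ) × B) →₀ ℤ

variable {P B D : Type*}

/-- The root of a unit: forget all prefixes. -/
noncomputable def rootU (u : UnitG P B) : RootG B :=
  Finsupp.mapDomain Prod.snd u

/-- Embed a root unit back into the units, with empty prefixes. -/
noncomputable def unrootU (f : RootG B) : UnitG P B :=
  Finsupp.mapDomain (fun b => ((0 : PrefG P), b)) f

/-- Strip all prefixes from a unit. -/
noncomputable def stripU (u : UnitG P B) : UnitG P B := unrootU (rootU u)

/-- The value of a prefix, given values of base prefixes. -/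
noncomputable def valP (val₀ : P → Ratio) (f : PrefG P) : Ratio :=
  ∏ p ∈ f.support, val₀ p ^ (f p)

/-- The prefix value of a unit. -/
noncomputable def pvalU (val₀ : P → Ratio) (g : UnitG P B) : Ratio :=
  ∏ x ∈ g.support, valP val₀ x.1 ^ (g x)

/-- The dimension of a root unit, given dimensions of base units. -/
noncomputable def dimRoot (dim₀ : B → D →₀ ℤ) (f : RootG B) : D →₀ ℤ :=
  ∑ b ∈ f.support, f b • dim₀ b

/-- The dimension of a unit. -/
noncomputable def dimU (dim₀ : B → D →₀ ℤ) (u : UnitG P B) : D →₀ ℤ :=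
  dimRoot dim₀ (rootU u)

/-- The combined prefix of a unit. -/
noncomputable def prefU (u : UnitG P B) : PrefG P :=
  ∑ x ∈ u.support, u x • x.1

/-- Normalization of a unit. -/
noncomputable def normU (u : UnitG P B) : PrefG P × RootG B :=
  (prefU u, rootU u)

/-- Evaluation of a unit. -/
noncomputable def evalU (val₀ : P → Ratio) (u : UnitG P B) : Ratio × RootG B :=
  (pvalU val₀ u, rootU u)

/-- A unit conversion: dimensionally consistent and functional in the ratio. -/
def IsConversion (dim₀ : B → D →₀ ℤ) (C : Set (UnitG P B × Ratio × UnitG P B)) : Prop :=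
  (∀ u r v, (u, r, v) ∈ C → dimU dim₀ u = dimU dim₀ v) ∧
  (∀ u r r' v, (u, r, v) ∈ C → (u, r', v) ∈ C → r = r')

/-- The closure rules for unit conversions. -/
inductive ClosureRel {P B : Type*} (val₀ : P → Ratio)
    (C : Set (UnitG P B × Ratio × UnitG P B)) :
    UnitG P B → Ratio → UnitG P B → Prop
  | base {u r v} : (u, r, v) ∈ C → ClosureRel val₀ C u r v
  | mul {u r v u' r' v'} : ClosureRel val₀ C u r v → ClosureRel val₀ C u' r' v' →
      ClosureRel val₀ C (u + u') (r * r') (v + v')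
  | inv {u r v} : ClosureRel val₀ C u r v → ClosureRel val₀ C (-u) r⁻¹ (-v)
  | pe (u : UnitG P B) : ClosureRel val₀ C u (pvalU val₀ u) (stripU u)
  | pe' (u : UnitG P B) : ClosureRel val₀ C (stripU u) (pvalU val₀ u)⁻¹ u

/-- The conversion closure: the smallest relation containing `C` closed under the rules. -/
def convClosure (val₀ : P → Ratio) (C : Set (UnitG P B × Ratio × UnitG P B)) :
    Set (UnitG P B × Ratio × UnitG P B) :=
  {t | ClosureRel val₀ C t.1 t.2.1 t.2.2}

/-- Convertibility with respect to a conversion. -/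
def Convertible (C : Set (UnitG P B × Ratio × UnitG P B)) (u v : UnitG P B) : Prop :=
  ∃ r, (u, r, v) ∈ C

/-- Coherence with respect to a conversion. -/
def Coherent (C : Set (UnitG P B × Ratio × UnitG P B)) (u v : UnitG P B) : Prop :=
  (u, (1 : Ratio), v) ∈ C

/-- The unit `δu₀` corresponding to a base unit. -/
noncomputable def deltaB (P : Type*) {B : Type*} (u₀ : B) : UnitG P B :=
  Finsupp.single ((0 : PrefG P), u₀) 1

/-- A defining conversion: basic and functional in its first component. -/
def IsDefining (C : Set (UnitG P B × Ratio × UnitG P B)) : Prop :=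
  (∀ u r v, (u, r, v) ∈ C → ∃ u₀ : B, u = deltaB P u₀) ∧
  (∀ u r v r' v', (u, r, v) ∈ C → (u, r', v') ∈ C → v = v')

/-- One-step dependency between base units. -/
def Depends (C : Set (UnitG P B × Ratio × UnitG P B)) (u₀ v₀ : B) : Prop :=
  ∃ r v, (deltaB P u₀, r, v) ∈ C ∧ v₀ ∈ (rootU v).support

/-- The dependency order `>_C`. -/
def DepOrd (C : Set (UnitG P B × Ratio × UnitG P B)) : B → B → Prop :=
  Relation.TransGen (Depends C)

/-- The domain of a defining conversion. -/
def domC (C : Set (UnitG P B × Ratio × UnitG P B)) : Set B :=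
  {u₀ : B | ∃ r v, (deltaB P u₀, r, v) ∈ C}


/-- Definition expansion. -/
noncomputable def xpd (C : Set (UnitG P B × Ratio × UnitG P B)) (u₀ : B) :
    Ratio × UnitG P B :=
  haveI := Classical.propDecidable (∃ rv : Ratio × UnitG P B, (deltaB P u₀, rv.1, rv.2) ∈ C)
  if h : ∃ rv : Ratio × UnitG P B, (deltaB P u₀, rv.1, rv.2) ∈ C then h.choose
  else (1, deltaB P u₀)

/-- The base rewriting map. -/
noncomputable def rwrB (val₀ : P → Ratio) (C : Set (UnitG P B × Ratio × UnitG P B))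
    (u₀ : B) : Ratio × RootG B :=
  ((xpd C u₀).1 * pvalU val₀ (xpd C u₀).2, rootU (xpd C u₀).2)

/-- One rewriting step on evaluated units. -/
noncomputable def rwrStep (val₀ : P → Ratio) (C : Set (UnitG P B × Ratio × UnitG P B)) :
    Ratio × RootG B → Ratio × RootG B :=
  fun p => (p.1 * ∏ b ∈ p.2.support, (rwrB val₀ C b).1 ^ (p.2 b),
            ∑ b ∈ p.2.support, p.2 b • (rwrB val₀ C b).2)

/-! `valP val₀` turns sums of prefixes into products of values, so the prefix value of a unit is
the value of its combined prefix: evaluation factors through normalization, root through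
evaluation, and dimension through root. -/

section
variable (val₀ : P → Ratio)

theorem valP_zero : valP val₀ 0 = 1 := by simp [valP]

theorem valP_add (f g : PrefG P) : valP val₀ (f + g) = valP val₀ f * valP val₀ g :=
  Finsupp.prod_add_index' (fun _ => zpow_zero _) (fun _ => zpow_add _)

noncomputable def valPHom : Multiplicative (PrefG P) →* Ratio where
  toFun f := valP val₀ f.toAdd
  map_one' := valP_zero val₀
  map_mul' := valP_add val₀

theorem valP_zsmul (n : ℤ) (f : PrefG P) : valP val₀ (n • f) = valP val₀ f ^ n := by
  have h := map_zpow (valPHom val₀) (.ofAdd f) n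
  rw [← ofAdd_zsmul] at h
  exact h

theorem valP_sum {ι : Type*} (s : Finset ι) (g : ι → PrefG P) :
    valP val₀ (∑ i ∈ s, g i) = ∏ i ∈ s, valP val₀ (g i) := by
  have h := map_prod (valPHom val₀) (fun i => .ofAdd (g i)) s
  rw [← ofAdd_sum] at h
  exact h

end

theorem pvalU_eq_valP_prefU (val₀ : P → Ratio) (u : UnitG P B) :
    pvalU val₀ u = valP val₀ (prefU u) := by
  simp only [pvalU, prefU, valP_sum, valP_zsmul]

theorem evalU_eq_map_normU (val₀ : P → Ratio) (u : UnitG P B) :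
    evalU val₀ u = Prod.map (valP val₀) id (normU u) := by
  rw [evalU, pvalU_eq_valP_prefU]
  rfl

/-- Normal equivalence entails numerical equivalence, which entails root equivalence,
which entails codimensionality. -/
theorem norm_entails_eval_entails_root_entails_dim {P B D : Type*}
    (val₀ : P → Ratio) (dim₀ : B → D →₀ ℤ) (u v : UnitG P B) :
    (normU u = normU v → evalU val₀ u = evalU val₀ v) ∧
    (evalU val₀ u = evalU val₀ v → rootU u = rootU v) ∧
    (rootU u = rootU v → dimU dim₀ u = dimU dim₀ v) := by
  refine ⟨fun h => ?_, congrArg Prod.snd, congrArg (dimRoot dim₀)⟩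
  rw [evalU_eq_map_normU, evalU_eq_map_normU, h]
end

section
/- Consistency is non-local: for the closure C* of a unit conversion C, the following are equivalent: (a) there exist units u, v and ratios r₁ ≠ r₂ with u →r₁ v and u →r₂ v in C*; (b) for every pair of units u', v' with u' →t v' in C* for some t, there exist t₁ ≠ t₂ with u' →t₁ v' and u' →t₂ v' in C*; (c) there exists a ratio s ≠ 1 with 0 →s 0 in C*. -/
open Finsupp

variable {P B D : Type*}

namespace ClosureRel

variable {P B : Type*} {val₀ : P → Ratio} {C : Set (UnitG P B × Ratio × UnitG P B)}
  {u v : UnitG P B} {r₁ r₂ s : Ratio}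

theorem zero_one_zero : ClosureRel val₀ C 0 1 0 := by
  simpa [pvalU, stripU, rootU, unrootU] using ClosureRel.pe (val₀ := val₀) (C := C) 0

theorem zero_mul_inv_zero (h₁ : ClosureRel val₀ C u r₁ v) (h₂ : ClosureRel val₀ C u r₂ v) :
    ClosureRel val₀ C 0 (r₁ * r₂⁻¹) 0 := by
  simpa using h₁.mul h₂.inv

theorem mul_zero_zero (h : ClosureRel val₀ C u r₁ v) (hs : ClosureRel val₀ C 0 s 0) :
    ClosureRel val₀ C u (r₁ * s) v := by
  simpa using h.mul hs

end ClosureRel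

theorem consistency_nonlocal_general {P B : Type*} (val₀ : P → Ratio)
    (C : Set (UnitG P B × Ratio × UnitG P B)) :
    ((∃ (u v : UnitG P B) (r₁ r₂ : Ratio), r₁ ≠ r₂ ∧
        (u, r₁, v) ∈ convClosure val₀ C ∧ (u, r₂, v) ∈ convClosure val₀ C) ↔
      (∀ u' v' : UnitG P B, (∃ t : Ratio, (u', t, v') ∈ convClosure val₀ C) →
        ∃ t₁ t₂ : Ratio, t₁ ≠ t₂ ∧
          (u', t₁, v') ∈ convClosure val₀ C ∧ (u', t₂, v') ∈ convClosure val₀ C)) ∧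
    ((∃ s : Ratio, s ≠ 1 ∧
        ((0 : UnitG P B), s, (0 : UnitG P B)) ∈ convClosure val₀ C) ↔
      (∃ (u v : UnitG P B) (r₁ r₂ : Ratio), r₁ ≠ r₂ ∧
        (u, r₁, v) ∈ convClosure val₀ C ∧ (u, r₂, v) ∈ convClosure val₀ C)) := by
  have loop_of_ambiguous : (∃ (u v : UnitG P B) (r₁ r₂ : Ratio), r₁ ≠ r₂ ∧
        (u, r₁, v) ∈ convClosure val₀ C ∧ (u, r₂, v) ∈ convClosure val₀ C) →
      ∃ s : Ratio, s ≠ 1 ∧ ((0 : UnitG P B), s, (0 : UnitG P B)) ∈ convClosure val₀ C := by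
    rintro ⟨u, v, r₁, r₂, hne, h₁, h₂⟩
    exact ⟨r₁ * r₂⁻¹, mul_inv_eq_one.not.mpr hne, ClosureRel.zero_mul_inv_zero h₁ h₂⟩
  have ambiguous_of_loop : (∃ s : Ratio, s ≠ 1 ∧
        ((0 : UnitG P B), s, (0 : UnitG P B)) ∈ convClosure val₀ C) →
      ∀ u' v' : UnitG P B, (∃ t : Ratio, (u', t, v') ∈ convClosure val₀ C) →
        ∃ t₁ t₂ : Ratio, t₁ ≠ t₂ ∧
          (u', t₁, v') ∈ convClosure val₀ C ∧ (u', t₂, v') ∈ convClosure val₀ C := by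
    rintro ⟨s, hs, hs₀⟩ u' v' ⟨t, ht⟩
    exact ⟨t, t * s, fun h => hs (left_eq_mul.mp h), ht, ClosureRel.mul_zero_zero ht hs₀⟩
  refine ⟨⟨fun h => ambiguous_of_loop (loop_of_ambiguous h), fun h => ?_⟩,
    ⟨fun ⟨s, hs, hs₀⟩ => ⟨0, 0, s, 1, hs, hs₀, ClosureRel.zero_one_zero⟩, loop_of_ambiguous⟩⟩
  obtain ⟨t₁, t₂, hne, h₁, h₂⟩ := h 0 0 ⟨1, ClosureRel.zero_one_zero⟩
  exact ⟨0, 0, t₁, t₂, hne, h₁, h₂⟩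

/-- Consistency is non-local: contradictory factors for some pair, contradictory
factors for every convertible pair, and a nontrivial factor on the empty unit are
all equivalent in the closure of a unit conversion. -/
theorem consistency_nonlocal {P B D : Type*} (val₀ : P → Ratio) (dim₀ : B → D →₀ ℤ)
    (C : Set (UnitG P B × Ratio × UnitG P B)) (hC : IsConversion dim₀ C) :
    ((∃ (u v : UnitG P B) (r₁ r₂ : Ratio), r₁ ≠ r₂ ∧
        (u, r₁, v) ∈ convClosure val₀ C ∧ (u, r₂, v) ∈ convClosure val₀ C) ↔
      (∀ u' v' : UnitG P B, (∃ t : Ratio, (u', t, v') ∈ convClosure val₀ C) →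
        ∃ t₁ t₂ : Ratio, t₁ ≠ t₂ ∧
          (u', t₁, v') ∈ convClosure val₀ C ∧ (u', t₂, v') ∈ convClosure val₀ C)) ∧
    ((∃ s : Ratio, s ≠ 1 ∧
        ((0 : UnitG P B), s, (0 : UnitG P B)) ∈ convClosure val₀ C) ↔
      (∃ (u v : UnitG P B) (r₁ r₂ : Ratio), r₁ ≠ r₂ ∧
        (u, r₁, v) ∈ convClosure val₀ C ∧ (u, r₂, v) ∈ convClosure val₀ C)) :=
  consistency_nonlocal_general val₀ C
end

section
/- In the conversion hierarchy, each property entails the preceding one: every closed conversion is consistent; every finitely generated conversion is closed; if B is finite, every defined conversion is finitely generated; every well-defined conversion is defined; and every regular conversion is well-defined. -/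
open Finsupp

variable {P B D : Type*}

/-- A conversion is consistent iff its closure is again a unit conversion. -/
def Consistent (val₀ : P → Ratio) (dim₀ : B → D →₀ ℤ)
    (C : Set (UnitG P B × Ratio × UnitG P B)) : Prop :=
  IsConversion dim₀ (convClosure val₀ C)

/-- A conversion is closed iff it is its own closure. -/
def Closed (val₀ : P → Ratio) (C : Set (UnitG P B × Ratio × UnitG P B)) : Prop :=
  C = convClosure val₀ C

/-- A conversion is finitely generated iff it is the closure of a finite unit conversion. -/
def FinGenerated (val₀ : P → Ratio) (dim₀ : B → D →₀ ℤ)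
    (C : Set (UnitG P B × Ratio × UnitG P B)) : Prop :=
  ∃ F : Set (UnitG P B × Ratio × UnitG P B),
    F.Finite ∧ IsConversion dim₀ F ∧ C = convClosure val₀ F

/-- A conversion is defined iff it is the closure of a defining unit conversion. -/
def DefinedConv (val₀ : P → Ratio) (dim₀ : B → D →₀ ℤ)
    (C : Set (UnitG P B × Ratio × UnitG P B)) : Prop :=
  ∃ F : Set (UnitG P B × Ratio × UnitG P B),
    IsConversion dim₀ F ∧ IsDefining F ∧ C = convClosure val₀ F

/-- A conversion is well-defined iff it is the closure of a well-defining unit conversion. -/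
def WellDefinedConv (val₀ : P → Ratio) (dim₀ : B → D →₀ ℤ)
    (C : Set (UnitG P B × Ratio × UnitG P B)) : Prop :=
  ∃ F : Set (UnitG P B × Ratio × UnitG P B),
    IsConversion dim₀ F ∧ IsDefining F ∧ WellFounded (Function.swap (DepOrd F)) ∧
      C = convClosure val₀ F

/-- A conversion is regular iff it is the closure of the empty conversion. -/
def Regular (val₀ : P → Ratio) (C : Set (UnitG P B × Ratio × UnitG P B)) : Prop :=
  C = convClosure val₀ (∅ : Set (UnitG P B × Ratio × UnitG P B))


lemma convClosure_mono {P B : Type*} (val₀ : P → Ratio)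
    {C C' : Set (UnitG P B × Ratio × UnitG P B)}
    (h : ∀ u r v, (u, r, v) ∈ C → ClosureRel val₀ C' u r v)
    {u r v} (hc : ClosureRel val₀ C u r v) : ClosureRel val₀ C' u r v := by
  induction hc with
  | base hb => exact h _ _ _ hb
  | mul _ _ ih ih' => exact ClosureRel.mul ih ih'
  | inv _ ih => exact ClosureRel.inv ih
  | pe u => exact ClosureRel.pe u
  | pe' u => exact ClosureRel.pe' u

lemma convClosure_idem {P B : Type*} (val₀ : P → Ratio)
    (C : Set (UnitG P B × Ratio × UnitG P B)) :
    convClosure val₀ (convClosure val₀ C) = convClosure val₀ C := by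
  ext ⟨u, r, v⟩
  constructor
  · exact fun h => convClosure_mono val₀ (fun u r v hb => hb) h
  · exact fun h => ClosureRel.base h

lemma depord_empty {P B : Type*} {a b : B} :
    ¬ DepOrd (∅ : Set (UnitG P B × Ratio × UnitG P B)) a b := by
  intro h
  induction h with
  | single hd => obtain ⟨r, v, hm, -⟩ := hd; exact hm
  | tail _ hd _ => obtain ⟨r, v, hm, -⟩ := hd; exact hm

/-- Each property in the conversion hierarchy entails the preceding one. -/
theorem conversion_hierarchy {P B D : Type*} (val₀ : P → Ratio) (dim₀ : B → D →₀ ℤ) :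
    (∀ C : Set (UnitG P B × Ratio × UnitG P B),
      IsConversion dim₀ C → Closed val₀ C → Consistent val₀ dim₀ C) ∧
    (∀ C : Set (UnitG P B × Ratio × UnitG P B),
      FinGenerated val₀ dim₀ C → Closed val₀ C) ∧
    (Finite B → ∀ C : Set (UnitG P B × Ratio × UnitG P B),
      DefinedConv val₀ dim₀ C → FinGenerated val₀ dim₀ C) ∧
    (∀ C : Set (UnitG P B × Ratio × UnitG P B),
      WellDefinedConv val₀ dim₀ C → DefinedConv val₀ dim₀ C) ∧
    (∀ C : Set (UnitG P B × Ratio × UnitG P B),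
      Regular val₀ C → WellDefinedConv val₀ dim₀ C) := by
  refine ⟨?_, ?_, ?_, ?_, ?_⟩
  · intro C hC hCl
    unfold Consistent
    rw [← hCl]
    exact hC
  · rintro C ⟨F, -, -, rfl⟩
    exact (convClosure_idem val₀ F).symm
  · rintro hB C ⟨F, hF, hD, rfl⟩
    refine ⟨F, ?_, hF, rfl⟩
    rw [← Set.finite_coe_iff]
    have hinj : Function.Injective (fun t : F =>
        (hD.1 t.1.1 t.1.2.1 t.1.2.2 t.2).choose) := by
      rintro ⟨t, ht⟩ ⟨t', ht'⟩ h
      have h1 := (hD.1 t.1 t.2.1 t.2.2 ht).choose_spec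
      have h2 := (hD.1 t'.1 t'.2.1 t'.2.2 ht').choose_spec
      simp only at h
      have hu : t.1 = t'.1 := by rw [h1, h2, h]
      have ht2 : (t.1, t.2.1, t.2.2) ∈ F := ht
      have ht2' : (t.1, t'.2.1, t'.2.2) ∈ F := hu ▸ ht'
      have hv : t.2.2 = t'.2.2 := hD.2 _ _ _ _ _ ht2 ht2'
      have hr : t.2.1 = t'.2.1 := hF.2 _ _ _ _ ht2 (hv ▸ ht2')
      ext1
      exact Prod.ext hu (Prod.ext hr hv)
    exact Finite.of_injective _ hinj
  · rintro C ⟨F, hF, hD, -, rfl⟩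
    exact ⟨F, hF, hD, rfl⟩
  · rintro C rfl
    refine ⟨∅, ⟨fun u r v h => h.elim, fun u r r' v h => h.elim⟩,
      ⟨fun u r v h => h.elim, fun u r v r' v' h => h.elim⟩, ?_, rfl⟩
    exact ⟨fun x => ⟨x, fun y hy => absurd hy depord_empty⟩⟩
end

section
/- In a closed conversion C, any two root-equivalent units are convertible with factor pval(u)·pval(v)⁻¹, and any two numerically equivalent units are coherent: if root u = root v then u →(pval u · (pval v)⁻¹) v in C (hence u ∝_C v), and if eval u = eval v then u ≅_C v. -/
open Finsupp

variable {P B D : Type*}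

lemma pvalU_stripU (val₀ : P → Ratio) (u : UnitG P B) :
    pvalU val₀ (stripU u) = 1 := by
  classical
  unfold pvalU stripU unrootU
  apply Finset.prod_eq_one
  intro x hx
  have hx' := Finsupp.mapDomain_support hx
  simp only [Finset.mem_image] at hx'
  obtain ⟨b, _, rfl⟩ := hx'
  have : valP val₀ (0 : PrefG P) = 1 := by simp [valP]
  rw [this]
  exact Subtype.ext (by rw [Positive.coe_zpow]; simp)

lemma rootU_unrootU (f : RootG B) : rootU (unrootU (P := P) f) = f := by
  unfold rootU unrootU
  rw [← Finsupp.mapDomain_comp]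
  exact Finsupp.mapDomain_id

lemma stripU_stripU (u : UnitG P B) : stripU (stripU u) = stripU u := by
  unfold stripU
  rw [rootU_unrootU]

/-- In a closed conversion, root equivalent units are convertible with factor
`pval u * (pval v)⁻¹`, and numerically equivalent units are coherent. -/
theorem closed_conv_root_eval {P B D : Type*} (val₀ : P → Ratio) (dim₀ : B → D →₀ ℤ)
    (C : Set (UnitG P B × Ratio × UnitG P B)) (hC : IsConversion dim₀ C)
    (hcl : C = convClosure val₀ C) (u v : UnitG P B) :
    (rootU u = rootU v →
      (u, pvalU val₀ u * (pvalU val₀ v)⁻¹, v) ∈ C ∧ Convertible C u v) ∧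
    (evalU val₀ u = evalU val₀ v → Coherent C u v) := by
  have key : rootU u = rootU v →
      (u, pvalU val₀ u * (pvalU val₀ v)⁻¹, v) ∈ C := by
    intro hr
    have hs : stripU u = stripU v := by unfold stripU; rw [hr]
    rw [hcl]
    show ClosureRel val₀ C u (pvalU val₀ u * (pvalU val₀ v)⁻¹) v
    have h1 : ClosureRel val₀ C (u + stripU v)
        (pvalU val₀ u * (pvalU val₀ v)⁻¹) (stripU u + v) :=
      ClosureRel.mul (ClosureRel.pe u) (ClosureRel.pe' v)
    have h2 : ClosureRel val₀ C (-(stripU u)) (1 : Ratio)⁻¹ (-(stripU u)) := by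
      have := ClosureRel.inv (ClosureRel.pe (val₀ := val₀) (C := C) (stripU u))
      rwa [pvalU_stripU, stripU_stripU] at this
    have h3 := ClosureRel.mul h1 h2
    have e1 : u + stripU v + -(stripU u) = u := by rw [hs]; abel
    have e2 : stripU u + v + -(stripU u) = v := by abel
    have e3 : pvalU val₀ u * (pvalU val₀ v)⁻¹ * (1 : Ratio)⁻¹ =
        pvalU val₀ u * (pvalU val₀ v)⁻¹ := by group
    rwa [e1, e2, e3] at h3
  refine ⟨fun hr => ⟨key hr, ⟨_, key hr⟩⟩, fun he => ?_⟩
  have hp : pvalU val₀ u = pvalU val₀ v := congrArg Prod.fst he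
  have hr : rootU u = rootU v := congrArg Prod.snd he
  have := key hr
  rwa [hp, mul_inv_cancel] at this
end

section
/- Evaluated unit depth is a termination function for rewriting: for a well-defining conversion C and any evaluated unit u, if d_eval(u) = 0 then rwr(C)(u) = u, and if d_eval(u) > 0 then d_eval(rwr(C)(u)) < d_eval(u). -/
open Finsupp

variable {P B D : Type*}

lemma ratio_one_zpow (n : ℤ) : (1 : Ratio) ^ n = 1 := by
  ext
  rw [Positive.coe_zpow]
  norm_num

lemma pval_deltaB {P B : Type*} (val₀ : P → Ratio) (u₀ : B) :
    pvalU val₀ (deltaB P u₀) = 1 := by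
  unfold pvalU deltaB
  rw [Finsupp.support_single_ne_zero _ one_ne_zero, Finset.prod_singleton,
    Finsupp.single_eq_same]
  have h : valP val₀ (0 : PrefG P) = 1 := by
    unfold valP; simp
  rw [h]; exact ratio_one_zpow 1

lemma root_deltaB {P B : Type*} (u₀ : B) :
    rootU (deltaB P u₀ : UnitG P B) = Finsupp.single u₀ 1 := by
  unfold rootU deltaB
  rw [Finsupp.mapDomain_single]

lemma xpd_of_not_mem {P B : Type*} (C : Set (UnitG P B × Ratio × UnitG P B)) {u₀ : B}
    (h : u₀ ∉ domC C) : xpd C u₀ = (1, deltaB P u₀) := by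
  unfold xpd
  rw [dif_neg]
  rintro ⟨rv, hrv⟩
  exact h ⟨rv.1, rv.2, hrv⟩

lemma xpd_mem {P B : Type*} (C : Set (UnitG P B × Ratio × UnitG P B)) {u₀ : B}
    (h : u₀ ∈ domC C) : (deltaB P u₀, (xpd C u₀).1, (xpd C u₀).2) ∈ C := by
  obtain ⟨r, v, hrv⟩ := h
  have hex : ∃ rv : Ratio × UnitG P B, (deltaB P u₀, rv.1, rv.2) ∈ C := ⟨(r, v), hrv⟩
  unfold xpd
  rw [dif_pos hex]
  exact hex.choose_spec

open Classical in
/-- Evaluated unit depth is a termination function for rewriting: depth-0 units are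
fixed, and rewriting strictly decreases positive depth. -/
theorem depth_termination {P B D : Type*} [Finite B] (val₀ : P → Ratio)
    (dim₀ : B → D →₀ ℤ) (C : Set (UnitG P B × Ratio × UnitG P B))
    (hC : IsConversion dim₀ C) (hdef : IsDefining C)
    (hwf : WellFounded (Function.swap (DepOrd C)))
    (d : B → ℕ)
    (hd : ∀ u₀ : B, d u₀ =
      if u₀ ∈ domC C then 1 + sSup {n : ℕ | ∃ v₀ : B, DepOrd C u₀ v₀ ∧ n = d v₀}
      else 0) :
    ∀ p : Ratio × RootG B,
      (p.2.support.sup d = 0 → rwrStep val₀ C p = p) ∧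
      (0 < p.2.support.sup d →
        (rwrStep val₀ C p).2.support.sup d < p.2.support.sup d) := by
  intro p
  obtain ⟨s, f⟩ := p
  constructor
  · intro h0
    have hb0 : ∀ b ∈ f.support, b ∉ domC C := by
      intro b hb hmem
      have h1 := Finset.le_sup (f := d) hb
      rw [h0] at h1
      have hdb := hd b
      rw [if_pos hmem] at hdb
      omega
    have hrwrB : ∀ b ∈ f.support, rwrB val₀ C b = (1, Finsupp.single b 1) := by
      intro b hb
      unfold rwrB
      rw [xpd_of_not_mem C (hb0 b hb)]
      simp [pval_deltaB, root_deltaB]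
    unfold rwrStep
    simp only [Prod.mk.injEq]
    constructor
    · have h1 : ∀ b ∈ f.support, (rwrB val₀ C b).1 ^ f b = 1 := by
        intro b hb; rw [hrwrB b hb]; exact ratio_one_zpow (f b)
      rw [Finset.prod_congr rfl h1, Finset.prod_const_one, mul_one]
    · rw [Finset.sum_congr rfl (fun b hb => by rw [hrwrB b hb])]
      have h2 := Finsupp.sum_single f
      rw [Finsupp.sum] at h2
      have h3 : ∀ b : B, f b • (Finsupp.single b (1 : ℤ)) = Finsupp.single b (f b) :=
        fun b => by rw [Finsupp.smul_single, smul_eq_mul, mul_one]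
      calc ∑ b ∈ f.support, f b • (Finsupp.single b (1 : ℤ))
          = ∑ b ∈ f.support, Finsupp.single b (f b) :=
            Finset.sum_congr rfl (fun b _ => h3 b)
        _ = f := h2
  · intro hpos
    have hpos' : 0 < f.support.sup d := hpos
    have hdc : ∀ c ∈ ((rwrStep val₀ C (s, f)).2).support, d c < f.support.sup d := by
      intro c hc
      simp only [rwrStep] at hc
      obtain ⟨b, hb, hcb⟩ := Finsupp.mem_support_finset_sum c hc
      have hcb' : c ∈ ((rwrB val₀ C b).2).support := Finsupp.support_smul hcb
      by_cases hmem : b ∈ domC C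
      · -- Depends C b c
        have hdep : Depends C b c := ⟨(xpd C b).1, (xpd C b).2, xpd_mem C hmem, hcb'⟩
        have hS : d c ∈ {n : ℕ | ∃ v₀ : B, DepOrd C b v₀ ∧ n = d v₀} :=
          ⟨c, Relation.TransGen.single hdep, rfl⟩
        have hbdd : BddAbove {n : ℕ | ∃ v₀ : B, DepOrd C b v₀ ∧ n = d v₀} := by
          refine (Set.Finite.bddAbove ((Set.finite_range d).subset ?_))
          rintro n ⟨v₀, _, rfl⟩
          exact ⟨v₀, rfl⟩
        have hle := le_csSup hbdd hS
        have hdb := hd b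
        rw [if_pos hmem] at hdb
        have : d c < d b := by omega
        exact lt_of_lt_of_le this (Finset.le_sup hb)
      · have hx := xpd_of_not_mem C hmem
        rw [rwrB, hx] at hcb'
        simp only [root_deltaB] at hcb'
        rw [Finsupp.support_single_ne_zero _ one_ne_zero, Finset.mem_singleton] at hcb'
        subst hcb'
        have hdb := hd c
        rw [if_neg hmem] at hdb
        omega
    exact (Finset.sup_lt_iff hpos).mpr hdc
end
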